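/- arXiv:2202.01100 — 3 statements merged into one kernel-verified Lean document; each statement's English description precedes it below -/
import Mathlib

section
/- The function f(μ, ε) = Φ(μ/2 - ε/μ) - e^ε Φ(-μ/2 - ε/μ), where Φ is the standard normal CDF, is strictly monotonically increasing in μ for μ > 0, for every fixed real ε. -/
noncomputable def stdNormalPDF (x : ℝ) : ℝ :=
  (Real.sqrt (2 * Real.pi))⁻¹ * Real.exp (-x ^ 2 / 2)

noncomputable def stdNormalCDF (x : ℝ) : ℝ := ∫ t in Set.Iic x, stdNormalPDF t

noncomputable def gaussF (μ ε : ℝ) : ℝ :=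
  stdNormalCDF (μ / 2 - ε / μ) - Real.exp ε * stdNormalCDF (-μ / 2 - ε / μ)

/-!
Differentiating in `μ`, the chain rule produces `φ(μ/2 - ε/μ) (1/2 + ε/μ²)` and
`e^ε φ(-μ/2 - ε/μ) (-1/2 + ε/μ²)`. The two Gaussian densities are related by
`e^ε φ(-μ/2 - ε/μ) = φ(μ/2 - ε/μ)`, since the exponents differ by exactly `ε`, so the `ε/μ²`
terms cancel and `∂f/∂μ = φ(μ/2 - ε/μ) > 0`.
-/

open MeasureTheory ProbabilityTheory Set

theorem hasDerivAt_integral_Iic {E : Type*} [NormedAddCommGroup E] [NormedSpace ℝ E]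
    [CompleteSpace E] {f : ℝ → E} (hf : Integrable f) {x : ℝ} (hx : ContinuousAt f x) :
    HasDerivAt (fun y => ∫ t in Iic y, f t) (f x) x := by
  have hsplit : (fun y => ∫ t in Iic y, f t) = fun y => (∫ t in Iic 0, f t) + ∫ t in 0..y, f t := by
    funext y
    rw [← intervalIntegral.integral_Iic_sub_Iic hf.integrableOn hf.integrableOn]
    abel
  rw [hsplit]
  exact (intervalIntegral.integral_hasDerivAt_right hf.intervalIntegrable
    hf.aestronglyMeasurable.stronglyMeasurableAtFilter hx).const_add _

theorem stdNormalPDF_eq_gaussianPDFReal : stdNormalPDF = gaussianPDFReal 0 1 := by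
  funext x
  simp [stdNormalPDF, gaussianPDFReal]

theorem stdNormalPDF_pos (x : ℝ) : 0 < stdNormalPDF x := by
  rw [stdNormalPDF_eq_gaussianPDFReal]
  exact gaussianPDFReal_pos _ _ _ one_ne_zero

theorem integrable_stdNormalPDF : Integrable stdNormalPDF :=
  stdNormalPDF_eq_gaussianPDFReal ▸ ProbabilityTheory.integrable_gaussianPDFReal 0 1

theorem continuous_stdNormalPDF : Continuous stdNormalPDF := by
  unfold stdNormalPDF
  fun_prop

theorem hasDerivAt_stdNormalCDF (x : ℝ) : HasDerivAt stdNormalCDF (stdNormalPDF x) x :=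
  hasDerivAt_integral_Iic integrable_stdNormalPDF continuous_stdNormalPDF.continuousAt

theorem exp_mul_stdNormalPDF_neg_half_sub_div {μ : ℝ} (hμ : μ ≠ 0) (ε : ℝ) :
    Real.exp ε * stdNormalPDF (-μ / 2 - ε / μ) = stdNormalPDF (μ / 2 - ε / μ) := by
  unfold stdNormalPDF
  rw [mul_left_comm, ← Real.exp_add]
  congr 2
  field_simp
  ring

theorem hasDerivAt_mul_sub_div {μ : ℝ} (hμ : μ ≠ 0) (c ε : ℝ) :
    HasDerivAt (fun x => c * x - ε / x) (c + ε / μ ^ 2) μ := by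
  have := ((hasDerivAt_id' μ).const_mul c).fun_sub ((hasDerivAt_inv hμ).const_mul ε)
  simp only [← div_eq_mul_inv] at this
  exact this.congr_deriv (by ring)

theorem hasDerivAt_gaussF {μ : ℝ} (hμ : μ ≠ 0) (ε : ℝ) :
    HasDerivAt (fun x => gaussF x ε) (stdNormalPDF (μ / 2 - ε / μ)) μ := by
  have hplus := (hasDerivAt_stdNormalCDF _).comp μ (hasDerivAt_mul_sub_div hμ (1 / 2) ε)
  have hminus := ((hasDerivAt_stdNormalCDF _).comp μ
    (hasDerivAt_mul_sub_div hμ (-(1 / 2)) ε)).const_mul (Real.exp ε)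
  have hfun : (fun x => gaussF x ε) = fun x =>
      stdNormalCDF (1 / 2 * x - ε / x) - Real.exp ε * stdNormalCDF (-(1 / 2) * x - ε / x) := by
    funext x
    rw [gaussF]
    ring_nf
  rw [hfun]
  refine (hplus.sub hminus).congr_deriv ?_
  rw [show -(1 / 2) * μ - ε / μ = -μ / 2 - ε / μ by ring, ← mul_assoc,
    exp_mul_stdNormalPDF_neg_half_sub_div hμ, show 1 / 2 * μ - ε / μ = μ / 2 - ε / μ by ring]
  ring

theorem gaussF_strictMonoOn_mu (ε : ℝ) :
    StrictMonoOn (fun μ => gaussF μ ε) (Set.Ioi (0 : ℝ)) := by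
  have hderiv : ∀ μ ∈ Ioi (0 : ℝ),
      HasDerivAt (fun μ => gaussF μ ε) (stdNormalPDF (μ / 2 - ε / μ)) μ :=
    fun μ hμ => hasDerivAt_gaussF (ne_of_gt hμ) ε
  apply strictMonoOn_of_hasDerivWithinAt_pos (convex_Ioi 0)
    (fun μ hμ => (hderiv μ hμ).continuousAt.continuousWithinAt)
  · rw [interior_Ioi]
    exact fun μ hμ => (hderiv μ hμ).hasDerivWithinAt
  · exact fun μ _ => stdNormalPDF_pos _
end

section
/- Let M be a randomized mechanism on discrete output space R, f : R → R' a deterministic post-processing map, and X, X' two inputs. Define for ε ∈ ℝ the quantity H_M(ε) = P(L_{M,X,X'} ≥ ε) - e^ε P(L_{M,X',X} ≤ -ε), where L_{M,X,X'} is the privacy loss random variable, i.e., the distribution of log(P(M(X)=ω)/P(M(X')=ω)) when ω ~ M(X). Then for every real ε (including negative ε), H_{f∘M}(ε) ≤ H_M(ε). -/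
/-!
Write `d = p - e^ε q`. Both sides are sums of positive parts: on the right of `d` itself, on the
left of the sums of `d` over the fibres `g ⁻¹' {r'}`. The positive part of a sum is at most the sum
of the positive parts, so the left side is bounded fibre by fibre by the sum of `d⁺` over each
fibre, and these fibre sums add up to the right side.
-/

lemma ite_le_sub_eq_posPart {α : Type*} [AddCommGroup α] [LinearOrder α] [IsOrderedAddMonoid α]
    (a b : α) : (if a ≤ b then b - a else 0) = (b - a)⁺ := by
  split_ifs with h
  · exact (posPart_of_nonneg (sub_nonneg.2 h)).symm
  · exact (posPart_eq_zero.2 (sub_nonpos.2 (le_of_not_ge h))).symm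

lemma tsum_ite_eq_tsum_preimage {ι κ α : Type*} [AddCommMonoid α] [TopologicalSpace α]
    [DecidableEq κ] (g : ι → κ) (f : ι → α) (k : κ) :
    (∑' i, if g i = k then f i else 0) = ∑' i : g ⁻¹' {k}, f i := by
  rw [tsum_subtype]
  simp only [Set.indicator, Set.mem_preimage, Set.mem_singleton_iff]

section Real

variable {ι κ : Type*} {f : ι → ℝ}

lemma Summable.posPart (hf : Summable f) : Summable fun i => (f i)⁺ :=
  hf.abs.of_nonneg_of_le (fun _ => posPart_nonneg _) fun _ =>
    sup_le (le_abs_self _) (abs_nonneg _)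

lemma posPart_tsum_le_tsum_posPart (hf : Summable f) : (∑' i, f i)⁺ ≤ ∑' i, (f i)⁺ :=
  sup_le (hf.tsum_le_tsum (fun _ => le_posPart _) hf.posPart)
    (tsum_nonneg fun _ => posPart_nonneg _)

lemma tsum_posPart_fiberwise_le (hf : Summable f) (g : ι → κ) :
    ∑' k, (∑' i : g ⁻¹' {k}, f i)⁺ ≤ ∑' i, (f i)⁺ := by
  have hfib := hf.posPart.hasSum.tsum_fiberwise g
  have hle : ∀ k, (∑' i : g ⁻¹' {k}, f i)⁺ ≤ ∑' i : g ⁻¹' {k}, (f i)⁺ :=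
    fun k => posPart_tsum_le_tsum_posPart (hf.subtype _)
  have hsum := hfib.summable.of_nonneg_of_le (fun _ => posPart_nonneg _) hle
  exact (hsum.tsum_le_tsum hle hfib.summable).trans_eq hfib.tsum_eq

end Real

open Classical in
theorem postprocessing_hockey_stick_general {R R' : Type*}
    (p q : R → ℝ)
    (hps : Summable p) (hqs : Summable q)
    (g : R → R') (ε : ℝ) :
    (∑' r' : R',
        if Real.exp ε * (∑' r : R, if g r = r' then q r else 0)
            ≤ (∑' r : R, if g r = r' then p r else 0) then
          (∑' r : R, if g r = r' then p r else 0)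
            - Real.exp ε * (∑' r : R, if g r = r' then q r else 0)
        else 0)
      ≤ ∑' r : R, if Real.exp ε * q r ≤ p r then p r - Real.exp ε * q r else 0 := by
  have fibre_sub : ∀ r', (∑' r, if g r = r' then p r else 0)
      - Real.exp ε * (∑' r, if g r = r' then q r else 0)
      = ∑' r : g ⁻¹' {r'}, (p r - Real.exp ε * q r) := fun r' => by
    rw [tsum_ite_eq_tsum_preimage, tsum_ite_eq_tsum_preimage, ← tsum_mul_left]
    exact ((hps.subtype _).tsum_sub ((hqs.subtype _).mul_left _)).symm
  simp only [ite_le_sub_eq_posPart]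
  simp only [fibre_sub]
  exact tsum_posPart_fiberwise_le (hps.sub (hqs.mul_left _)) g

open Classical in
theorem postprocessing_hockey_stick {R R' : Type*} [Countable R] [Countable R']
    (p q : R → ℝ) (hp0 : ∀ r, 0 ≤ p r) (hq0 : ∀ r, 0 ≤ q r)
    (hps : Summable p) (hqs : Summable q)
    (hp1 : ∑' r, p r = 1) (hq1 : ∑' r, q r = 1)
    (g : R → R') (ε : ℝ) :
    (∑' r' : R',
        if Real.exp ε * (∑' r : R, if g r = r' then q r else 0)
            ≤ (∑' r : R, if g r = r' then p r else 0) then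
          (∑' r : R, if g r = r' then p r else 0)
            - Real.exp ε * (∑' r : R, if g r = r' then q r else 0)
        else 0)
      ≤ ∑' r : R, if Real.exp ε * q r ≤ p r then p r - Real.exp ε * q r else 0 :=
  postprocessing_hockey_stick_general p q hps hqs g ε
end

section
/- Let β ∈ (0, 1], ε ∈ ℝ, and let L₊⁺, L₋⁺ be real-valued random variables. Define L₊ as equal to +∞ with probability 1 - β and L₊⁺ + ln β with probability β, and L₋ = L₋⁺ - ln β. Then P(L₋ ≥ ε) - e^ε P(L₊ ≤ -ε) = P(L₋⁺ ≥ ε₃) - e^{ε₃} P(L₊⁺ ≤ -ε₃), where ε₃ = ε + ln β. -/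
/-!
The atom at `+∞` never lies in `(-∞, -ε]`, so only the `β`-weighted shifted part of `L₊`
contributes; undoing the shifts by `ln β` moves both thresholds to `ε₃`, and `e^ε β = e^{ε₃}`.
-/

open MeasureTheory Set

lemma MeasureTheory.Measure.map_sub_const_apply_Ici (μ : Measure ℝ) (c a : ℝ) :
    μ.map (fun x => x - c) (Ici a) = μ (Ici (a + c)) := by
  rw [Measure.map_apply (measurable_sub_const c) measurableSet_Ici]
  congr 1
  ext x
  simp

lemma MeasureTheory.Measure.map_coe_add_const_apply_Iic (μ : Measure ℝ) (c a : ℝ) :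
    μ.map (fun x => ((x + c : ℝ) : EReal)) (Iic (a : EReal)) = μ (Iic (a - c)) := by
  rw [Measure.map_apply (measurable_add_const c).coe_real_ereal measurableSet_Iic]
  congr 1
  ext x
  simp only [mem_preimage, mem_Iic, EReal.coe_le_coe_iff, le_sub_iff_add_le]

lemma MeasureTheory.Measure.dirac_top_apply_Iic_coe (a : ℝ) :
    Measure.dirac (⊤ : EReal) (Iic (a : EReal)) = 0 := by
  simp

lemma MeasureTheory.Measure.mixture_dirac_top_apply_Iic_coe (p q : ENNReal) (μ : Measure ℝ)
    (c a : ℝ) :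
    (p • Measure.dirac (⊤ : EReal) + q • μ.map (fun x => ((x + c : ℝ) : EReal)))
        (Iic (a : EReal)) = q * μ (Iic (a - c)) := by
  simp only [Measure.add_apply, Measure.smul_apply, Measure.dirac_top_apply_Iic_coe,
    Measure.map_coe_add_const_apply_Iic, smul_eq_mul, mul_zero, zero_add]

open MeasureTheory in
theorem mixture_plrv_decomposition_minus_general (β : ℝ) (hβ : β ∈ Set.Ioc (0 : ℝ) 1)
    (ε : ℝ)
    (Pp Qm : Measure ℝ) :
    let νp : Measure EReal :=
      ENNReal.ofReal (1 - β) • Measure.dirac (⊤ : EReal) +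
        ENNReal.ofReal β • (Pp.map (fun x => ((x + Real.log β : ℝ) : EReal)))
    let νm : Measure ℝ := Qm.map (fun x => x - Real.log β)
    (νm (Set.Ici ε)).toReal
        - Real.exp ε * (νp {x | x ≤ ((-ε : ℝ) : EReal)}).toReal
      = (Qm (Set.Ici (ε + Real.log β))).toReal
          - Real.exp (ε + Real.log β)
              * (Pp (Set.Iic (-(ε + Real.log β)))).toReal := by
  intro νp νm
  rw [show {x : EReal | x ≤ ((-ε : ℝ) : EReal)} = Iic ((-ε : ℝ) : EReal) from rfl,
    Measure.mixture_dirac_top_apply_Iic_coe, Measure.map_sub_const_apply_Ici,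
    ENNReal.toReal_mul, ENNReal.toReal_ofReal hβ.1.le, Real.exp_add, Real.exp_log hβ.1,
    neg_add']
  ring

open MeasureTheory in
theorem mixture_plrv_decomposition_minus (β : ℝ) (hβ : β ∈ Set.Ioc (0 : ℝ) 1)
    (ε : ℝ)
    (Pp Qm : Measure ℝ) [IsProbabilityMeasure Pp] [IsProbabilityMeasure Qm] :
    let νp : Measure EReal :=
      ENNReal.ofReal (1 - β) • Measure.dirac (⊤ : EReal) +
        ENNReal.ofReal β • (Pp.map (fun x => ((x + Real.log β : ℝ) : EReal)))
    let νm : Measure ℝ := Qm.map (fun x => x - Real.log β)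
    (νm (Set.Ici ε)).toReal
        - Real.exp ε * (νp {x | x ≤ ((-ε : ℝ) : EReal)}).toReal
      = (Qm (Set.Ici (ε + Real.log β))).toReal
          - Real.exp (ε + Real.log β)
              * (Pp (Set.Iic (-(ε + Real.log β)))).toReal :=
  mixture_plrv_decomposition_minus_general β hβ ε Pp Qm
end
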